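/- arXiv:1006.0293 — 3 statements merged into one kernel-verified Lean document; each statement's English description precedes it below -/
import Mathlib

section
/- For all integers k ≥ 2 and n ≥ 1, the group G(k,n,1,1) is trivial. (This is the assertion π₁(M_k^n) = 0 of Lemma 3.3 in its algebraic form.) -/
/-- Generators of the presentation: `a1, b1, a2, b2`, the tilde generators
`ct = c̃`, `dt = d̃`, and `c i`, `d i` for `i : Fin k`, where `c i` denotes
`c_{i+1}` (so `c ⟨0,_⟩ = c₁`, `c ⟨1,_⟩ = c₂`, …). -/
inductive Gen (k : ℕ) : Type
  | a1 | b1 | a2 | b2 | ct | dt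
  | c : Fin k → Gen k
  | d : Fin k → Gen k

namespace Gen

variable (k : ℕ)

def A1 : FreeGroup (Gen k) := FreeGroup.of Gen.a1
def B1 : FreeGroup (Gen k) := FreeGroup.of Gen.b1
def A2 : FreeGroup (Gen k) := FreeGroup.of Gen.a2
def B2 : FreeGroup (Gen k) := FreeGroup.of Gen.b2
def Ct : FreeGroup (Gen k) := FreeGroup.of Gen.ct
def Dt : FreeGroup (Gen k) := FreeGroup.of Gen.dt
def C (i : Fin k) : FreeGroup (Gen k) := FreeGroup.of (Gen.c i)
def D (i : Fin k) : FreeGroup (Gen k) := FreeGroup.of (Gen.d i)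

end Gen

open scoped commutatorElement

open Gen in
/-- The relators of the presentation of `π₁(M)` from Lemma 3.2 (a relation
`w = v` is encoded as the relator `w * v⁻¹`). -/
def rels (k n p r : ℕ) : Set (FreeGroup (Gen k)) :=
  { x |
    -- a₂ = c̃⁻¹ a₁ c̃
    x = A2 k * ((Ct k)⁻¹ * A1 k * Ct k)⁻¹ ∨
    -- b₂ = c̃⁻¹ b₁ c̃
    x = B2 k * ((Ct k)⁻¹ * B1 k * Ct k)⁻¹ ∨
    -- b₁ = c̃⁻¹ b₂ c̃
    x = B1 k * ((Ct k)⁻¹ * B2 k * Ct k)⁻¹ ∨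
    -- [b₂, d̃] = 1
    x = ⁅B2 k, Dt k⁆ ∨
    -- [a₁⁻¹ b₁⁻¹ a₂, d̃] = 1
    x = ⁅(A1 k)⁻¹ * (B1 k)⁻¹ * A2 k, Dt k⁆ ∨
    -- [a₂⁻¹ b₂⁻¹ a₁, d̃] = 1
    x = ⁅(A2 k)⁻¹ * (B2 k)⁻¹ * A1 k, Dt k⁆ ∨
    -- c̃⁻¹ a₁ a₂ c̃ a₁⁻¹ a₂⁻¹ = d̃
    x = (Ct k)⁻¹ * A1 k * A2 k * Ct k * (A1 k)⁻¹ * (A2 k)⁻¹ * (Dt k)⁻¹ ∨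
    -- [a₁, d̃⁻¹] = c̃
    x = ⁅A1 k, (Dt k)⁻¹⁆ * (Ct k)⁻¹ ∨
    -- [b₁, d̃] = 1
    x = ⁅B1 k, Dt k⁆ ∨
    -- [a₁, b₁][a₂, b₂] = 1
    x = ⁅A1 k, B1 k⁆ * ⁅A2 k, B2 k⁆ ∨
    -- [c₁,d₁][c₂,d₂]⋯[c_k,d_k][c̃,d̃] = 1
    x = (List.ofFn fun i : Fin k => ⁅C k i, D k i⁆).prod * ⁅Ct k, Dt k⁆ ∨
    -- relations involving c₁, d₁  (index 0)
    (∃ i : Fin k, (i : ℕ) = 0 ∧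
      (x = ⁅(B1 k)⁻¹, (D k i)⁻¹⁆ * (A1 k)⁻¹ ∨      -- [b₁⁻¹,d₁⁻¹] = a₁
       x = ⁅(A1 k)⁻¹, D k i⁆ * (B1 k)⁻¹ ∨           -- [a₁⁻¹,d₁] = b₁
       x = ⁅(B2 k)⁻¹, (D k i)⁻¹⁆ * (C k i)⁻¹ ∨      -- [b₂⁻¹,d₁⁻¹] = c₁
       x = ⁅B2 k, (C k i)⁻¹⁆ ^ n * (D k i)⁻¹ ∨      -- [b₂,c₁⁻¹]ⁿ = d₁
       x = ⁅A1 k, C k i⁆ ∨ x = ⁅B1 k, C k i⁆ ∨      -- [a₁,c₁] = [b₁,c₁] = 1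
       x = ⁅A2 k, C k i⁆ ∨ x = ⁅A2 k, D k i⁆)) ∨    -- [a₂,c₁] = [a₂,d₁] = 1
    -- relations involving c₂, d₂  (index 1)
    (∃ i : Fin k, (i : ℕ) = 1 ∧
      (x = ⁅(B2 k)⁻¹, (D k i)⁻¹⁆ * ((C k i) ^ p)⁻¹ ∨  -- [b₂⁻¹,d₂⁻¹] = c₂ᵖ
       x = ⁅B2 k, (C k i)⁻¹⁆ * ((D k i) ^ r)⁻¹)) ∨    -- [b₂,c₂⁻¹] = d₂ʳ
    -- relations [b₂⁻¹,d_i⁻¹] = c_i, [b₂,c_i⁻¹] = d_i for 3 ≤ i ≤ k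
    (∃ i : Fin k, 2 ≤ (i : ℕ) ∧
      (x = ⁅(B2 k)⁻¹, (D k i)⁻¹⁆ * (C k i)⁻¹ ∨
       x = ⁅B2 k, (C k i)⁻¹⁆ * (D k i)⁻¹)) ∨
    -- commuting relations for 2 ≤ i ≤ k
    (∃ i : Fin k, 1 ≤ (i : ℕ) ∧
      (x = ⁅A2 k, C k i⁆ ∨ x = ⁅A2 k, D k i⁆ ∨
       x = ⁅A1 k, C k i⁆ ∨ x = ⁅B1 k, D k i⁆ ∨
       x = ⁅A1 k, D k i⁆ ∨ x = ⁅B1 k, C k i⁆)) }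

/-- The group `G(k,n,p,r)` of Lemma 3.2/3.3: the fundamental group of the
surgered manifold, given by the above presentation. -/
abbrev G (k n p r : ℕ) : Type := PresentedGroup (rels k n p r)

/-- The image in `G k n p r` of a generator. -/
abbrev gen (k n p r : ℕ) (g : Gen k) : G k n p r := PresentedGroup.of g

/-! Conjugation by `d̃` fixes `b₁` and `b₂`, sends `a₁ ↦ c̃⁻¹a₁` (from `[a₁, d̃⁻¹] = c̃`) and hence
`a₂ ↦ b₁c̃⁻¹b₁⁻¹a₂`; since it also fixes `a₂⁻¹b₂⁻¹a₁`, `c̃` commutes with `b₂b₁`. As conjugation by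
`c̃` swaps `b₁` and `b₂`, these two commute. Conjugation by `d₁` sends `b₁ ↦ b₁a₁` and `b₂ ↦ b₂c₁`,
which makes `a₁` commute with `b₂`, so `b₂` commutes with `c̃ = [a₁, d̃⁻¹]` and `b₁ = b₂`. Then
`c₁ = a₁` commutes with `b₂`, so `d₁ = [b₂, c₁⁻¹]ⁿ = 1` and the other generators collapse in turn;
for `p = r = 1` each remaining `c_i`, `d_i` is a commutator with `b₂ = 1`. -/

section GroupIdentities

variable {H : Type*} [Group H]

theorem Commute.commutatorElement_right {x a b : H} (ha : Commute x a) (hb : Commute x b) :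
    Commute x ⁅a, b⁆ := by
  rw [commutatorElement_def]
  exact ((ha.mul_right hb).mul_right ha.inv_right).mul_right hb.inv_right

theorem commute_of_conj_swap {t x y : H} (hx : y = t⁻¹ * x * t) (hy : x = t⁻¹ * y * t)
    (h : Commute t (y * x)) : Commute x y :=
  calc x * y = t⁻¹ * y * t * (t⁻¹ * x * t) := by rw [← hx, ← hy]
    _ = y * x := by rw [← h.inv_mul_cancel]; group

theorem commute_of_commutatorElement_eq {x y u v d : H} (hx : ⁅x⁻¹, d⁻¹⁆ = u)
    (hy : ⁅y⁻¹, d⁻¹⁆ = v) (hxy : Commute x y) (hvu : Commute v u) (hvx : Commute v x) :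
    Commute u y := by
  have hconj : Commute (x * u) (y * v) := by
    have hxu : x * u = d⁻¹ * x * d⁻¹⁻¹ := by rw [← hx]; group
    have hyv : y * v = d⁻¹ * y * d⁻¹⁻¹ := by rw [← hy]; group
    rw [hxu, hyv]
    exact hxy.conj d⁻¹
  refine mul_left_cancel (a := x) (mul_right_cancel (b := v) ?_)
  calc x * (u * y) * v = y * v * (x * u) := by rw [← hconj.eq]; group
    _ = y * x * (v * u) := by rw [mul_assoc y, ← mul_assoc v, hvx.eq]; group
    _ = x * (y * u) * v := by rw [hvu.eq, ← hxy.eq]; group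

theorem commute_ct_of_dt_relations {a₁ b₁ a₂ b₂ ct dt : H} (h₄ : Commute b₂ dt)
    (h₅ : Commute (a₁⁻¹ * b₁⁻¹ * a₂) dt) (h₆ : Commute (a₂⁻¹ * b₂⁻¹ * a₁) dt)
    (h₈ : ⁅a₁, dt⁻¹⁆ = ct) (h₉ : Commute b₁ dt) : Commute ct (b₂ * b₁) := by
  let φ := MulAut.conj dt⁻¹
  have fix : ∀ {x}, Commute x dt → φ x = x := fun h => by
    simp only [φ, MulAut.conj_apply, inv_inv, h.symm.inv_mul_cancel]
  have ha₁ : φ a₁ = ct⁻¹ * a₁ := by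
    rw [← h₈]; simp only [φ, MulAut.conj_apply, commutatorElement_def]; group
  have ha₂ : φ a₂ = b₁ * ct⁻¹ * b₁⁻¹ * a₂ := by
    have h := fix h₅
    simp only [map_mul, map_inv, ha₁, fix h₉] at h
    calc φ a₂ = b₁ * (ct⁻¹ * a₁) * ((ct⁻¹ * a₁)⁻¹ * b₁⁻¹ * φ a₂) := by group
      _ = b₁ * ct⁻¹ * b₁⁻¹ * a₂ := by rw [h]; group
  have key : a₂⁻¹ * b₁ * ct * b₁⁻¹ * b₂⁻¹ * ct⁻¹ * a₁ = a₂⁻¹ * b₂⁻¹ * a₁ :=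
    calc _ = φ (a₂⁻¹ * b₂⁻¹ * a₁) := by simp only [map_mul, map_inv, ha₁, ha₂, fix h₄]; group
      _ = _ := fix h₆
  rw [← Commute.inv_right_iff]
  calc ct * (b₂ * b₁)⁻¹
        = b₁⁻¹ * (a₂ * (a₂⁻¹ * b₁ * ct * b₁⁻¹ * b₂⁻¹ * ct⁻¹ * a₁) * a₁⁻¹) * ct := by group
    _ = (b₂ * b₁)⁻¹ * ct := by rw [key]; group

theorem generators_eq_one_of_relations {n : ℕ} {a₁ b₁ a₂ b₂ ct dt c₁ d₁ : H}
    (h₁ : a₂ = ct⁻¹ * a₁ * ct) (h₂ : b₂ = ct⁻¹ * b₁ * ct) (h₃ : b₁ = ct⁻¹ * b₂ * ct)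
    (h₄ : Commute b₂ dt) (h₅ : Commute (a₁⁻¹ * b₁⁻¹ * a₂) dt)
    (h₆ : Commute (a₂⁻¹ * b₂⁻¹ * a₁) dt) (h₇ : ct⁻¹ * a₁ * a₂ * ct * a₁⁻¹ * a₂⁻¹ = dt)
    (h₈ : ⁅a₁, dt⁻¹⁆ = ct) (h₉ : Commute b₁ dt)
    (t₁ : ⁅b₁⁻¹, d₁⁻¹⁆ = a₁) (t₂ : ⁅a₁⁻¹, d₁⁆ = b₁) (t₃ : ⁅b₂⁻¹, d₁⁻¹⁆ = c₁)
    (t₄ : ⁅b₂, c₁⁻¹⁆ ^ n = d₁) (t₅ : Commute a₁ c₁) (t₆ : Commute b₁ c₁) :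
    a₁ = 1 ∧ b₁ = 1 ∧ a₂ = 1 ∧ b₂ = 1 ∧ ct = 1 ∧ dt = 1 ∧ c₁ = 1 ∧ d₁ = 1 := by
  have hb₁b₂ : Commute b₁ b₂ :=
    commute_of_conj_swap h₂ h₃ (commute_ct_of_dt_relations h₄ h₅ h₆ h₈ h₉)
  have ha₁b₂ : Commute a₁ b₂ := commute_of_commutatorElement_eq t₁ t₃ hb₁b₂ t₅.symm t₆.symm
  have hb₂ct : Commute b₂ ct := h₈ ▸ ha₁b₂.symm.commutatorElement_right h₄.inv_right
  have hb : b₁ = b₂ := by rw [h₃, mul_assoc, hb₂ct.eq, inv_mul_cancel_left]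
  have hc₁ : c₁ = a₁ := by rw [← t₃, ← t₁, hb]
  have hd₁ : d₁ = 1 := by rw [← t₄, hc₁, ha₁b₂.symm.inv_right.commutator_eq, one_pow]
  have ha₁ : a₁ = 1 := by rw [← t₁, hd₁]; simp
  have hb₁ : b₁ = 1 := by rw [← t₂, hd₁]; simp
  have ha₂ : a₂ = 1 := by rw [h₁, ha₁]; group
  have hct : ct = 1 := by rw [← h₈, ha₁]; simp
  have hdt : dt = 1 := by rw [← h₇, ha₁, ha₂]; group
  exact ⟨ha₁, hb₁, ha₂, hb ▸ hb₁, hct, hdt, hc₁.trans ha₁, hd₁⟩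

end GroupIdentities

theorem map_of_eq_one_of_forall_rels {H : Type*} [Group H] {k n : ℕ} (hk : 0 < k)
    (f : FreeGroup (Gen k) →* H) (hf : ∀ w ∈ rels k n 1 1, f w = 1) (g : Gen k) :
    f (FreeGroup.of g) = 1 := by
  -- unfold `hf` into the list of defining relations, read in `H`
  simp only [rels, Set.mem_ofPred_eq, or_imp, forall_and, forall_eq, forall_exists_index, and_imp,
    forall_comm (α := FreeGroup (Gen k)), map_mul, map_inv, map_pow, map_commutatorElement,
    pow_one, mul_inv_eq_one, commutatorElement_eq_one_iff_commute] at hf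
  obtain ⟨h₁, h₂, h₃, h₄, h₅, h₆, h₇, h₈, h₉, -, -, ⟨t₁, t₂, t₃, t₄, t₅, t₆, -, -⟩,
    ⟨u₁, u₂⟩, ⟨v₁, v₂⟩, -⟩ := hf
  let i₀ : Fin k := ⟨0, hk⟩
  obtain ⟨ha₁, hb₁, ha₂, hb₂, hct, hdt, hc₁, hd₁⟩ := generators_eq_one_of_relations h₁ h₂ h₃
    h₄ h₅ h₆ h₇ h₈ h₉ (t₁ i₀ rfl) (t₂ i₀ rfl) (t₃ i₀ rfl) (t₄ i₀ rfl) (t₅ i₀ rfl) (t₆ i₀ rfl)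
  have hcd : ∀ i : Fin k, 0 < (i : ℕ) → f (Gen.C k i) = 1 ∧ f (Gen.D k i) = 1 := by
    intro i hi
    obtain ⟨hc, hd⟩ : ⁅(f (Gen.B2 k))⁻¹, (f (Gen.D k i))⁻¹⁆ = f (Gen.C k i) ∧
        ⁅f (Gen.B2 k), (f (Gen.C k i))⁻¹⁆ = f (Gen.D k i) := by
      rcases (show (i : ℕ) = 1 ∨ 2 ≤ (i : ℕ) by omega) with h | h
      exacts [⟨u₁ i h, u₂ i h⟩, ⟨v₁ i h, v₂ i h⟩]
    rw [← hc, ← hd, hb₂]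
    simp
  have hi₀ : ∀ i : Fin k, (i : ℕ) = 0 → i = i₀ := fun i h => Fin.ext h
  cases g with
  | a1 => exact ha₁
  | b1 => exact hb₁
  | a2 => exact ha₂
  | b2 => exact hb₂
  | ct => exact hct
  | dt => exact hdt
  | c i =>
    rcases Nat.eq_zero_or_pos i with h | h
    exacts [hi₀ i h ▸ hc₁, (hcd i h).1]
  | d i =>
    rcases Nat.eq_zero_or_pos i with h | h
    exacts [hi₀ i h ▸ hd₁, (hcd i h).2]

theorem G_one_one_trivial_general (k n : ℕ) (hk : 2 ≤ k) :
    ∀ x : G k n 1 1, x = 1 := by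
  have hgen : ∀ g, gen k n 1 1 g = 1 :=
    map_of_eq_one_of_forall_rels (by omega) _ fun _ => PresentedGroup.one_of_mem
  exact fun x => Subgroup.mem_bot.mp
    (PresentedGroup.generated_by _ ⊥ (fun g => Subgroup.mem_bot.mpr (hgen g)) x)

/-- Lemma 3.3, triviality assertion: for `k ≥ 2` and
`n ≥ 1`, the group `G(k,n,1,1)` is trivial. -/
theorem G_one_one_trivial (k n : ℕ) (hk : 2 ≤ k) (hn : 1 ≤ n) :
    ∀ x : G k n 1 1, x = 1 :=
  G_one_one_trivial_general k n hk
end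

section
/- For all integers k ≥ 2, n ≥ 1, p ≥ 0, r ≥ 0, the images of the generators b₁ and b₂ commute in G(k,n,p,r), i.e. [b₁,b₂] = 1 holds in G(k,n,p,r). (First step in the proof of Lemma 3.3.) -/
open scoped commutatorElement

/-!
Conjugation by `c̃` swaps `b₁` and `b₂`, hence sends `b₂b₁` to `b₁b₂`, so it suffices that `c̃`
commutes with `b₂b₁`. Since `c̃ = [a₁, d̃⁻¹] = (a₁d̃a₁⁻¹)⁻¹d̃` and `b₁, b₂` commute with `d̃`, this
reduces to `d̃` commuting with `a₁⁻¹(b₂b₁)⁻¹a₁ = (a₁⁻¹b₁⁻¹a₂)(a₂⁻¹b₂⁻¹a₁)`, a product of two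
elements that commute with `d̃` by the relations.
-/

section
variable {H : Type*} [Group H]

theorem Commute.of_conj_swap {c x y : H} (hx : c⁻¹ * x * c = y) (hy : c⁻¹ * y * c = x)
    (h : Commute (y * x) c) : Commute x y :=
  calc x * y = (c⁻¹ * y * c) * (c⁻¹ * x * c) := by rw [hx, hy]
    _ = c⁻¹ * (y * x) * c := by group
    _ = y * x := by rw [mul_assoc, h.eq, inv_mul_cancel_left]

theorem Commute.commutatorElement_inv_right_of_conj {a d x : H} (hd : Commute x d)
    (h : Commute (a⁻¹ * x * a) d) : Commute x ⁅a, d⁻¹⁆ := by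
  have hconj : Commute x (a * d * a⁻¹) := by
    simpa [mul_assoc] using (Commute.conj_iff a).mpr h
  have hcomm : ⁅a, d⁻¹⁆ = (a * d * a⁻¹)⁻¹ * d := by group
  exact hcomm ▸ hconj.inv_right.mul_right hd

theorem commute_b1_b2_of_relations {a₁ b₁ a₂ b₂ c d : H}
    (hb₁ : c⁻¹ * b₁ * c = b₂) (hb₂ : c⁻¹ * b₂ * c = b₁)
    (hb₁d : Commute b₁ d) (hb₂d : Commute b₂ d)
    (h₁ : Commute (a₁⁻¹ * b₁⁻¹ * a₂) d) (h₂ : Commute (a₂⁻¹ * b₂⁻¹ * a₁) d)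
    (hc : ⁅a₁, d⁻¹⁆ = c) : Commute b₁ b₂ := by
  have hprod : (a₁⁻¹ * b₁⁻¹ * a₂) * (a₂⁻¹ * b₂⁻¹ * a₁) = a₁⁻¹ * (b₂ * b₁)⁻¹ * a₁ := by group
  have hc' : Commute (b₂ * b₁)⁻¹ c := hc ▸
    (hb₂d.mul_left hb₁d).inv_left.commutatorElement_inv_right_of_conj (hprod ▸ h₁.mul_left h₂)
  exact Commute.of_conj_swap hb₁ hb₂ (Commute.inv_left_iff.mp hc')

end

theorem PresentedGroup.commute_mk_of_commutatorElement_mem {α : Type*} {rels : Set (FreeGroup α)}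
    {x y : FreeGroup α} (h : ⁅x, y⁆ ∈ rels) : Commute (mk rels x) (mk rels y) :=
  commutatorElement_eq_one_iff_commute.mp (map_commutatorElement (mk rels) x y ▸ one_of_mem h)

attribute [local simp] Gen.A1 Gen.B1 Gen.A2 Gen.B2 Gen.Ct Gen.Dt

theorem b1_b2_commute_general (k n p r : ℕ) :
    ⁅gen k n p r Gen.b1, gen k n p r Gen.b2⁆ = 1 := by
  refine commutatorElement_eq_one_iff_commute.mpr <| commute_b1_b2_of_relations
    (a₁ := gen k n p r .a1) (a₂ := gen k n p r .a2) (c := gen k n p r .ct) (d := gen k n p r .dt)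
    ?_ ?_ ?_ ?_ ?_ ?_ ?_
  · exact (PresentedGroup.mk_eq_mk_of_mul_inv_mem (by simp [rels])).symm
  · exact (PresentedGroup.mk_eq_mk_of_mul_inv_mem (by simp [rels])).symm
  · exact PresentedGroup.commute_mk_of_commutatorElement_mem (by simp [rels])
  · exact PresentedGroup.commute_mk_of_commutatorElement_mem (by simp [rels])
  · exact PresentedGroup.commute_mk_of_commutatorElement_mem (by simp [rels])
  · exact PresentedGroup.commute_mk_of_commutatorElement_mem (by simp [rels])
  · exact PresentedGroup.mk_eq_mk_of_mul_inv_mem (x := ⁅Gen.A1 k, (Gen.Dt k)⁻¹⁆)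
      (by simp [rels])

/-- first step of the proof of Lemma 3.3: the images of
`b₁` and `b₂` commute in `G(k,n,p,r)`. -/
theorem b1_b2_commute (k n p r : ℕ) (hk : 2 ≤ k) (hn : 1 ≤ n) :
    ⁅gen k n p r Gen.b1, gen k n p r Gen.b2⁆ = 1 :=
  b1_b2_commute_general k n p r
end

section
/- For all integers k ≥ 2 and n ≥ 1, the group H(k,n) — defined by the same generators and the same relations as G(k,n,1,1) but with the single relation [b₁,d₂] = 1 omitted — is trivial. (Algebraic core of Lemma 4.1: the complement of the torus q(a₁′×c₂′) in M_k^n is simply connected.) -/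
open scoped commutatorElement

open Gen in
/-- The relators of `H(k,n)`: the same relators as those of `G(k,n,1,1)`,
except that the single relation `[b₁,d₂] = 1` (the case `i = 1`, i.e. `d₂`,
of the relator `[b₁,d_i]` below) is omitted. -/
def relsH (k n : ℕ) : Set (FreeGroup (Gen k)) :=
  { x |
    x = A2 k * ((Ct k)⁻¹ * A1 k * Ct k)⁻¹ ∨
    x = B2 k * ((Ct k)⁻¹ * B1 k * Ct k)⁻¹ ∨
    x = B1 k * ((Ct k)⁻¹ * B2 k * Ct k)⁻¹ ∨
    x = ⁅B2 k, Dt k⁆ ∨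
    x = ⁅(A1 k)⁻¹ * (B1 k)⁻¹ * A2 k, Dt k⁆ ∨
    x = ⁅(A2 k)⁻¹ * (B2 k)⁻¹ * A1 k, Dt k⁆ ∨
    x = (Ct k)⁻¹ * A1 k * A2 k * Ct k * (A1 k)⁻¹ * (A2 k)⁻¹ * (Dt k)⁻¹ ∨
    x = ⁅A1 k, (Dt k)⁻¹⁆ * (Ct k)⁻¹ ∨
    x = ⁅B1 k, Dt k⁆ ∨
    x = ⁅A1 k, B1 k⁆ * ⁅A2 k, B2 k⁆ ∨
    x = (List.ofFn fun i : Fin k => ⁅C k i, D k i⁆).prod * ⁅Ct k, Dt k⁆ ∨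
    (∃ i : Fin k, (i : ℕ) = 0 ∧
      (x = ⁅(B1 k)⁻¹, (D k i)⁻¹⁆ * (A1 k)⁻¹ ∨
       x = ⁅(A1 k)⁻¹, D k i⁆ * (B1 k)⁻¹ ∨
       x = ⁅(B2 k)⁻¹, (D k i)⁻¹⁆ * (C k i)⁻¹ ∨
       x = ⁅B2 k, (C k i)⁻¹⁆ ^ n * (D k i)⁻¹ ∨
       x = ⁅A1 k, C k i⁆ ∨ x = ⁅B1 k, C k i⁆ ∨
       x = ⁅A2 k, C k i⁆ ∨ x = ⁅A2 k, D k i⁆)) ∨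
    (∃ i : Fin k, (i : ℕ) = 1 ∧
      (x = ⁅(B2 k)⁻¹, (D k i)⁻¹⁆ * ((C k i) ^ 1)⁻¹ ∨
       x = ⁅B2 k, (C k i)⁻¹⁆ * ((D k i) ^ 1)⁻¹)) ∨
    (∃ i : Fin k, 2 ≤ (i : ℕ) ∧
      (x = ⁅(B2 k)⁻¹, (D k i)⁻¹⁆ * (C k i)⁻¹ ∨
       x = ⁅B2 k, (C k i)⁻¹⁆ * (D k i)⁻¹)) ∨
    (∃ i : Fin k, 1 ≤ (i : ℕ) ∧
      (x = ⁅A2 k, C k i⁆ ∨ x = ⁅A2 k, D k i⁆ ∨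
       x = ⁅A1 k, C k i⁆ ∨ ((i : ℕ) ≠ 1 ∧ x = ⁅B1 k, D k i⁆) ∨
       x = ⁅A1 k, D k i⁆ ∨ x = ⁅B1 k, C k i⁆)) }

/-- The group `H(k,n)` of Lemma 4.1: same presentation as `G(k,n,1,1)` with
the relation `[b₁,d₂] = 1` omitted. -/
abbrev H (k n : ℕ) : Type := PresentedGroup (relsH k n)

/-!
Conjugation by `d̃` fixes `b₁`, `b₂`, `a₁⁻¹b₁⁻¹a₂`, `a₂⁻¹b₂⁻¹a₁` and sends `a₁` to `c̃⁻¹a₁`;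
computing the image of `a₂ = b₁a₁ · a₁⁻¹b₁⁻¹a₂ = b₂⁻¹a₁ · (a₂⁻¹b₂⁻¹a₁)⁻¹` in two ways shows that
`c̃` commutes with `b₂b₁`. As conjugation by `c̃` swaps `b₁` and `b₂`, these two commute.
Conjugation by `d₁` sends `b₁ ↦ b₁a₁` and `b₂ ↦ b₂c₁`, so `b₁a₁` commutes with `b₂c₁`, and since
`c₁` commutes with `a₁, b₁` this forces `[a₁, b₂] = 1`. Then `a₁` commutes with
`d₁ = [b₂, c₁⁻¹]ⁿ`, whence `b₁ = [a₁⁻¹, d₁] = 1` and `a₁ = [b₁⁻¹, d₁⁻¹] = 1`. The remaining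
relations now kill `a₂, b₂, c̃, d̃` and every `c_i, d_i`.
-/

section GroupLemmas

variable {G : Type*} [Group G]

theorem Commute.commutatorElement_right_s7 {a x y : G} (hx : Commute a x) (hy : Commute a y) :
    Commute a ⁅x, y⁆ := by
  rw [commutatorElement_def]
  exact ((hx.mul_right hy).mul_right hx.inv_right).mul_right hy.inv_right

theorem commute_of_conj_swap_s7 {s b b' : G} (hb' : b' = s⁻¹ * b * s) (hb : b = s⁻¹ * b' * s)
    (hs : Commute s (b' * b)) : Commute b b' :=
  calc b * b' = (s⁻¹ * b' * s) * (s⁻¹ * b * s) := by rw [← hb, ← hb']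
    _ = s⁻¹ * (b' * b) * s := by group
    _ = b' * b := by rw [hs.inv_left.eq]; group

theorem commute_c_b₂_mul_b₁ {a₁ b₁ a₂ b₂ c d : G} (hb₁ : Commute b₁ d) (hb₂ : Commute b₂ d)
    (h₁ : Commute (a₁⁻¹ * b₁⁻¹ * a₂) d) (h₂ : Commute (a₂⁻¹ * b₂⁻¹ * a₁) d)
    (hc : ⁅a₁, d⁻¹⁆ = c) : Commute c (b₂ * b₁) := by
  have ha₁ : d⁻¹ * a₁ * d = c⁻¹ * a₁ := by rw [← hc, commutatorElement_def]; group
  have e₁ : d⁻¹ * a₂ * d = b₁ * c⁻¹ * b₁⁻¹ * a₂ :=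
    calc d⁻¹ * a₂ * d
        = (d⁻¹ * b₁ * d) * (d⁻¹ * a₁ * d) * (d⁻¹ * (a₁⁻¹ * b₁⁻¹ * a₂) * d) := by group
      _ = b₁ * c⁻¹ * b₁⁻¹ * a₂ := by
        rw [hb₁.symm.inv_mul_cancel, ha₁, h₁.symm.inv_mul_cancel]; group
  have e₂ : d⁻¹ * a₂ * d = b₂⁻¹ * c⁻¹ * b₂ * a₂ :=
    calc d⁻¹ * a₂ * d
        = (d⁻¹ * b₂ * d)⁻¹ * (d⁻¹ * a₁ * d) * (d⁻¹ * (a₂⁻¹ * b₂⁻¹ * a₁) * d)⁻¹ := by group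
      _ = b₂⁻¹ * c⁻¹ * b₂ * a₂ := by
        rw [hb₂.symm.inv_mul_cancel, ha₁, h₂.symm.inv_mul_cancel]; group
  have e : b₁ * c⁻¹ * b₁⁻¹ = b₂⁻¹ * c⁻¹ * b₂ := mul_right_cancel (e₁.symm.trans e₂)
  rw [← Commute.inv_left_iff]
  calc c⁻¹ * (b₂ * b₁) = b₂ * (b₂⁻¹ * c⁻¹ * b₂) * b₁ := by group
    _ = b₂ * b₁ * c⁻¹ := by rw [← e]; group

theorem commute_a₁_b₂ {a₁ b₁ b₂ c₁ d₁ : G} (ha₁ : ⁅b₁⁻¹, d₁⁻¹⁆ = a₁) (hc₁ : ⁅b₂⁻¹, d₁⁻¹⁆ = c₁)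
    (hac : Commute a₁ c₁) (hbc : Commute b₁ c₁) (hbb : Commute b₁ b₂) : Commute a₁ b₂ := by
  have conj_eq {b x : G} (h : ⁅b⁻¹, d₁⁻¹⁆ = x) : MulAut.conj d₁⁻¹ b = b * x := by
    rw [MulAut.conj_apply, ← h, commutatorElement_def]; group
  have hconj : Commute (b₁ * a₁) (b₂ * c₁) := by
    simpa only [conj_eq ha₁, conj_eq hc₁] using hbb.map (MulAut.conj d₁⁻¹)
  have h : b₁ * (a₁ * b₂) * c₁ = b₁ * (b₂ * a₁) * c₁ :=
    calc b₁ * (a₁ * b₂) * c₁ = b₂ * c₁ * (b₁ * a₁) := by rw [← hconj.eq]; group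
      _ = b₂ * b₁ * a₁ * c₁ := by rw [mul_assoc, ← (hbc.mul_left hac).eq]; group
      _ = b₁ * (b₂ * a₁) * c₁ := by rw [← hbb.eq]; group
  exact mul_left_cancel (mul_right_cancel h)

end GroupLemmas

namespace H

variable {k n : ℕ}

open PresentedGroup Gen

theorem mk_eq_mk {w v : FreeGroup (Gen k)}
    (h : w * v⁻¹ ∈ relsH k n := by simp only [relsH, Set.mem_ofPred_eq]; grind) :
    mk (relsH k n) w = mk (relsH k n) v :=
  mk_eq_mk_of_mul_inv_mem h

theorem mk_eq_one {w : FreeGroup (Gen k)}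
    (h : w ∈ relsH k n := by simp only [relsH, Set.mem_ofPred_eq]; grind) :
    mk (relsH k n) w = 1 :=
  one_of_mem h

theorem of_a1_eq_one_and_of_b1_eq_one (i : Fin k) (hi : (i : ℕ) = 0) :
    (of a1 : H k n) = 1 ∧ (of b1 : H k n) = 1 := by
  set φ := mk (relsH k n)
  obtain ⟨hb₂, hb₁, hc, ha₁, hb₁', hc₁, hd₁⟩ :
      φ (B2 k) = φ ((Ct k)⁻¹ * B1 k * Ct k) ∧ φ (B1 k) = φ ((Ct k)⁻¹ * B2 k * Ct k) ∧
      φ ⁅A1 k, (Dt k)⁻¹⁆ = φ (Ct k) ∧ φ ⁅(B1 k)⁻¹, (D k i)⁻¹⁆ = φ (A1 k) ∧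
      φ ⁅(A1 k)⁻¹, D k i⁆ = φ (B1 k) ∧ φ ⁅(B2 k)⁻¹, (D k i)⁻¹⁆ = φ (C k i) ∧
      φ (⁅B2 k, (C k i)⁻¹⁆ ^ n) = φ (D k i) := by
    and_intros <;> exact mk_eq_mk
  obtain ⟨hb₂d, hu, hv, hb₁d, hac, hbc⟩ :
      φ ⁅B2 k, Dt k⁆ = 1 ∧ φ ⁅(A1 k)⁻¹ * (B1 k)⁻¹ * A2 k, Dt k⁆ = 1 ∧
      φ ⁅(A2 k)⁻¹ * (B2 k)⁻¹ * A1 k, Dt k⁆ = 1 ∧ φ ⁅B1 k, Dt k⁆ = 1 ∧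
      φ ⁅A1 k, C k i⁆ = 1 ∧ φ ⁅B1 k, C k i⁆ = 1 := by
    and_intros <;> exact mk_eq_one
  simp only [map_mul, map_inv, map_pow, map_commutatorElement,
    commutatorElement_eq_one_iff_commute] at hb₂ hb₁ hb₂d hu hv hc hb₁d ha₁ hb₁' hc₁ hd₁ hac hbc
  have hbb := commute_of_conj_swap_s7 hb₂ hb₁ (commute_c_b₂_mul_b₁ hb₁d hb₂d hu hv hc)
  have had : Commute (φ (A1 k)) (φ (D k i)) :=
    hd₁ ▸ ((commute_a₁_b₂ ha₁ hc₁ hac hbc hbb).commutatorElement_right_s7 hac.inv_right).pow_right n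
  have hb : φ (B1 k) = 1 := by rw [← hb₁', had.inv_left.commutator_eq]
  have ha : φ (A1 k) = 1 := by rw [← ha₁, hb, inv_one, commutatorElement_one_left]
  exact ⟨ha, hb⟩

theorem of_a2_b2_ct_dt_eq_one (ha₁ : (of a1 : H k n) = 1)
    (hb₁ : (of b1 : H k n) = 1) :
    (of a2 : H k n) = 1 ∧ (of b2 : H k n) = 1 ∧ (of ct : H k n) = 1 ∧ (of dt : H k n) = 1 := by
  set φ := mk (relsH k n)
  replace ha₁ : φ (A1 k) = 1 := ha₁
  replace hb₁ : φ (B1 k) = 1 := hb₁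
  obtain ⟨ha₂, hb₂, hd, hc⟩ :
      φ (A2 k) = φ ((Ct k)⁻¹ * A1 k * Ct k) ∧ φ (B2 k) = φ ((Ct k)⁻¹ * B1 k * Ct k) ∧
      φ ((Ct k)⁻¹ * A1 k * A2 k * Ct k * (A1 k)⁻¹ * (A2 k)⁻¹) = φ (Dt k) ∧
      φ ⁅A1 k, (Dt k)⁻¹⁆ = φ (Ct k) := by
    and_intros <;> exact mk_eq_mk
  have ha₂' : φ (A2 k) = 1 := by simpa [ha₁] using ha₂
  have hb₂' : φ (B2 k) = 1 := by simpa [hb₁] using hb₂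
  have hdt : φ (Dt k) = 1 := by simpa [ha₁, ha₂'] using hd.symm
  have hct : φ (Ct k) = 1 := by simpa [ha₁] using hc.symm
  exact ⟨ha₂', hb₂', hct, hdt⟩

theorem of_c_eq_one_and_of_d_eq_one (hb₂ : (of b2 : H k n) = 1) (i : Fin k) :
    (of (c i) : H k n) = 1 ∧ (of (d i) : H k n) = 1 := by
  set φ := mk (relsH k n)
  replace hb₂ : φ (B2 k) = 1 := hb₂
  obtain ⟨m, hc, hd⟩ : ∃ m : ℕ, φ ⁅(B2 k)⁻¹, (D k i)⁻¹⁆ = φ (C k i) ∧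
      φ (⁅B2 k, (C k i)⁻¹⁆ ^ m) = φ (D k i) := by
    obtain hi | hi | hi : (i : ℕ) = 0 ∨ (i : ℕ) = 1 ∨ 2 ≤ (i : ℕ) := by omega
    · exact ⟨n, mk_eq_mk, mk_eq_mk⟩
    · refine ⟨1, ?_, ?_⟩
      · simpa only [pow_one] using (mk_eq_mk : φ ⁅(B2 k)⁻¹, (D k i)⁻¹⁆ = φ (C k i ^ 1))
      · simpa only [pow_one] using (mk_eq_mk : φ ⁅B2 k, (C k i)⁻¹⁆ = φ (D k i ^ 1))
    · exact ⟨1, mk_eq_mk, by simpa only [pow_one] using mk_eq_mk⟩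
  simp only [map_pow, map_commutatorElement, map_inv, hb₂, inv_one, commutatorElement_one_left,
    one_pow] at hc hd
  exact ⟨hc.symm, hd.symm⟩

end H

theorem H_trivial_general (k n : ℕ) (hk : 2 ≤ k) :
    ∀ x : H k n, x = 1 := by
  obtain ⟨ha₁, hb₁⟩ := H.of_a1_eq_one_and_of_b1_eq_one (n := n) (⟨0, by omega⟩ : Fin k) rfl
  obtain ⟨ha₂, hb₂, hct, hdt⟩ := H.of_a2_b2_ct_dt_eq_one ha₁ hb₁
  have hgen : ∀ g : Gen k, (PresentedGroup.of g : H k n) = 1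
    | .a1 => ha₁
    | .b1 => hb₁
    | .a2 => ha₂
    | .b2 => hb₂
    | .ct => hct
    | .dt => hdt
    | .c i => (H.of_c_eq_one_and_of_d_eq_one hb₂ i).1
    | .d i => (H.of_c_eq_one_and_of_d_eq_one hb₂ i).2
  intro x
  exact DFunLike.congr_fun (PresentedGroup.ext (φ := MonoidHom.id (H k n)) (ψ := 1) hgen) x

/-- algebraic core of Lemma 4.1: for `k ≥ 2` and `n ≥ 1`,
the group `H(k,n)` is trivial. -/
theorem H_trivial (k n : ℕ) (hk : 2 ≤ k) (hn : 1 ≤ n) :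
    ∀ x : H k n, x = 1 :=
  H_trivial_general k n hk
end
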